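/- arXiv:2503.06804 — 5 statements merged into one kernel-verified Lean document; each statement's English description precedes it below -/
import Mathlib

section
/- If Y ~ N(m, q) with q > 0, then E[(max(Y - x̄, 0))²] = ((m - x̄)² + q) Φ((m - x̄)/√q) + (m - x̄) √(q/(2π)) exp(-(m - x̄)²/(2q)). -/
/-!
Writing `Y = m - √q Z` with `Z` standard normal and `a = (m - x̄) / √q`, the integrand is
`q · max (a - Z) 0 ^ 2`, so it suffices to compute `∫_{-∞}^a (a - z)² φ(z) dz` for the
standard normal density `φ`. Since `φ' z = -z φ z`, one has
`(a - z)² φ = (1 + a²) φ + ((2a - z) φ)'`, and the integral is `(1 + a²) Φ(a) + a φ(a)`.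
-/

open Real MeasureTheory ProbabilityTheory NNReal

/-- Standard normal CDF. -/
noncomputable def stdNormalCDF (t : ℝ) : ℝ :=
  ∫ y in Set.Iic t, (Real.sqrt (2 * Real.pi))⁻¹ * Real.exp (-(y ^ 2) / 2)

open Set Filter Topology

lemma gaussianPDFReal_zero_one (x : ℝ) :
    gaussianPDFReal 0 1 x = (√(2 * π))⁻¹ * rexp (-(1 / 2) * x ^ 2) := by
  simp only [gaussianPDFReal, NNReal.coe_one, mul_one, sub_zero]
  ring_nf

lemma stdNormalCDF_eq_setIntegral (t : ℝ) :
    stdNormalCDF t = ∫ x in Iic t, gaussianPDFReal 0 1 x := by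
  simp only [stdNormalCDF, gaussianPDFReal_zero_one]
  ring_nf

lemma hasDerivAt_gaussianPDFReal (μ : ℝ) (v : ℝ≥0) (x : ℝ) :
    HasDerivAt (gaussianPDFReal μ v) (-(x - μ) / v * gaussianPDFReal μ v x) x := by
  rw [gaussianPDFReal_def]
  refine ((((hasDerivAt_id x).sub_const μ).pow 2).neg.div_const _).exp.const_mul _ |>.congr_deriv ?_
  by_cases hv : (v : ℝ) = 0
  · simp [hv]
  · field_simp
    simp only [Pi.neg_apply, Pi.pow_apply, id, neg_div, Nat.cast_ofNat]
    ring

lemma integrable_pow_mul_gaussianPDFReal_zero_one (n : ℕ) :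
    Integrable fun x => x ^ n * gaussianPDFReal 0 1 x := by
  have h := (integrable_rpow_mul_exp_neg_mul_sq one_half_pos
    (by linarith [n.cast_nonneg (α := ℝ)] : (-1 : ℝ) < n)).const_mul (√(2 * π))⁻¹
  refine h.congr (ae_of_all _ fun x => ?_)
  simp only [gaussianPDFReal_zero_one, Real.rpow_natCast]
  ring

lemma tendsto_pow_mul_gaussianPDFReal_zero_one_cocompact (n : ℕ) :
    Tendsto (fun x => x ^ n * gaussianPDFReal 0 1 x) (cocompact ℝ) (𝓝 0) := by
  have h := (tendsto_rpow_abs_mul_exp_neg_mul_sq_cocompact one_half_pos n).const_mul (√(2 * π))⁻¹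
  rw [mul_zero] at h
  refine tendsto_zero_iff_norm_tendsto_zero.2 (h.congr fun x => ?_)
  simp only [gaussianPDFReal_zero_one, Real.rpow_natCast, norm_mul, norm_pow, norm_eq_abs,
    abs_of_pos (exp_pos _), abs_of_pos (inv_pos.2 (sqrt_pos.2 two_pi_pos))]
  ring

lemma setIntegral_Iic_sq_mul_gaussianPDFReal_zero_one (a : ℝ) :
    ∫ x in Iic a, (a - x) ^ 2 * gaussianPDFReal 0 1 x
      = (1 + a ^ 2) * stdNormalCDF a + a * gaussianPDFReal 0 1 a := by
  set φ := gaussianPDFReal 0 1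
  have hderiv : ∀ x, HasDerivAt (fun x => (2 * a - x) * φ x) ((x ^ 2 - 2 * a * x - 1) * φ x) x :=
    fun x =>
      (((hasDerivAt_id x).const_sub (2 * a)).mul (hasDerivAt_gaussianPDFReal 0 1 x)).congr_deriv
        (by simp only [id, NNReal.coe_one, div_one, sub_zero]; ring)
  have hlim : Tendsto (fun x => (2 * a - x) * φ x) atBot (𝓝 0) := by
    have h := ((tendsto_pow_mul_gaussianPDFReal_zero_one_cocompact 0).const_mul (2 * a)).sub
      (tendsto_pow_mul_gaussianPDFReal_zero_one_cocompact 1)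
    simp only [pow_zero, one_mul, pow_one, mul_zero, sub_zero] at h
    exact (h.mono_left atBot_le_cocompact).congr fun x => by ring
  have hint : Integrable fun x => (x ^ 2 - 2 * a * x - 1) * φ x :=
    (((integrable_pow_mul_gaussianPDFReal_zero_one 2).sub
      ((integrable_pow_mul_gaussianPDFReal_zero_one 1).const_mul (2 * a))).sub
      (integrable_gaussianPDFReal 0 1)).congr (ae_of_all _ fun x => by simp only [Pi.sub_apply]; ring)
  calc ∫ x in Iic a, (a - x) ^ 2 * φ x
      = ∫ x in Iic a, ((1 + a ^ 2) * φ x + (x ^ 2 - 2 * a * x - 1) * φ x) := by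
        congr 1 with x; ring
    _ = (1 + a ^ 2) * stdNormalCDF a + ((2 * a - a) * φ a - 0) := by
        rw [integral_add ((integrable_gaussianPDFReal 0 1).const_mul _).integrableOn
          hint.integrableOn, integral_const_mul, stdNormalCDF_eq_setIntegral,
          integral_Iic_of_hasDerivAt_of_tendsto' (fun x _ => hderiv x) hint.integrableOn hlim]
    _ = (1 + a ^ 2) * stdNormalCDF a + a * φ a := by ring

lemma integral_max_sub_zero_sq_gaussianReal_zero_one (a : ℝ) :
    ∫ x, max (a - x) 0 ^ 2 ∂gaussianReal 0 1
      = (1 + a ^ 2) * stdNormalCDF a + a * gaussianPDFReal 0 1 a := by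
  rw [integral_gaussianReal_eq_integral_smul one_ne_zero,
    ← setIntegral_Iic_sq_mul_gaussianPDFReal_zero_one,
    ← setIntegral_eq_integral_of_forall_compl_eq_zero (s := Iic a)]
  · refine setIntegral_congr_fun measurableSet_Iic fun x hx => ?_
    rw [smul_eq_mul, mul_comm, max_eq_left (sub_nonneg.2 hx)]
  · intro x hx
    rw [max_eq_right (sub_nonpos.2 (not_le.1 hx).le)]
    simp

lemma gaussianReal_map_const_sub_sqrt_mul (m : ℝ) (q : ℝ≥0) :
    (gaussianReal 0 1).map (fun z => m - √q * z) = gaussianReal m q := by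
  have : (fun z => m - √q * z) = (m - ·) ∘ (√q * ·) := rfl
  rw [this, ← Measure.map_map (by fun_prop) (by fun_prop), gaussianReal_map_const_mul,
    gaussianReal_map_const_sub]
  congr 1
  · simp
  · ext; simp [Real.sq_sqrt q.coe_nonneg]

/-- Expected squared positive part of `Y - x̄` for `Y ~ N(m, q)`, `q > 0`. -/
theorem expectation_sq_pos_part_gaussian
    {Ω : Type*} [MeasureSpace Ω] (P : Measure Ω) [IsProbabilityMeasure P]
    (Y : Ω → ℝ) (m : ℝ) (q : ℝ≥0) (hq : 0 < q) (xbar : ℝ)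
    (hY : P.map Y = gaussianReal m q) :
    (∫ ω, (max (Y ω - xbar) 0) ^ 2 ∂P) =
      ((m - xbar) ^ 2 + (q : ℝ)) * stdNormalCDF ((m - xbar) / Real.sqrt q)
        + (m - xbar) * Real.sqrt ((q : ℝ) / (2 * Real.pi)) *
          Real.exp (-((m - xbar) ^ 2) / (2 * (q : ℝ))) := by
  have hYm : AEMeasurable Y P := .of_map_ne_zero (by simp [hY, IsProbabilityMeasure.ne_zero])
  have hs : 0 < √(q : ℝ) := sqrt_pos.2 hq
  set a := (m - xbar) / √(q : ℝ)
  have hscale : ∀ z, max (m - √q * z - xbar) 0 ^ 2 = q * max (a - z) 0 ^ 2 := fun z => by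
    have hmax := mul_max_of_nonneg (a - z) 0 hs.le
    rw [mul_zero] at hmax
    rw [show m - √q * z - xbar = √q * (a - z) by simp only [a]; field_simp; ring,
      ← hmax, mul_pow, sq_sqrt q.coe_nonneg]
  calc ∫ ω, max (Y ω - xbar) 0 ^ 2 ∂P
      = ∫ x, max (x - xbar) 0 ^ 2 ∂gaussianReal m q := by
        rw [← hY, integral_map hYm (by fun_prop)]
    _ = ∫ z, q * max (a - z) 0 ^ 2 ∂gaussianReal 0 1 := by
        rw [← gaussianReal_map_const_sub_sqrt_mul, integral_map (by fun_prop) (by fun_prop)]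
        simp_rw [hscale]
    _ = q * ((1 + a ^ 2) * stdNormalCDF a + a * gaussianPDFReal 0 1 a) := by
        rw [integral_const_mul, integral_max_sub_zero_sq_gaussianReal_zero_one]
    _ = _ := by
        have ha2 : a ^ 2 = (m - xbar) ^ 2 / q := by rw [div_pow, sq_sqrt q.coe_nonneg]
        have hqa : q * a = (m - xbar) * √q := by
          simp only [a]; field_simp; rw [sq_sqrt q.coe_nonneg, mul_comm]
        rw [gaussianPDFReal_zero_one, ha2, sqrt_div q.coe_nonneg]
        field_simp
        linear_combination rexp (-((m - xbar) ^ 2 / (q * 2))) * hqa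
end

section
/- If Y ~ N(m, q) with q > 0 and a, b ≥ 0, then the expected penalty cost E[a·Y + b·(max(Y - x̄, 0))²] equals a·m + b·[((m - x̄)² + q) Φ((m - x̄)/√q) + (m - x̄) √(q/(2π)) exp(-(m - x̄)²/(2q))]. -/
/-!
Standardize: if `Z ~ N(0,1)` then `Y = m + √q Z`, so `(Y - x̄)⁺² = q ((Z + d)⁺)²` with
`d = (m - x̄)/√q`. Since `φ' = -x φ` for the standard normal density `φ`,
`(x + d)² φ = (-(x + 2d) φ)' + (d² + 1) φ`, and integrating over `(-d, ∞)` gives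
`E[((Z + d)⁺)²] = (d² + 1) Φ(d) + d φ(d)`. The linear term contributes `a m`.
-/

open Real MeasureTheory ProbabilityTheory NNReal

open Set Filter

noncomputable def stdNormalPDF (x : ℝ) : ℝ := (√(2 * π))⁻¹ * exp (-(x ^ 2) / 2)

lemma gaussianPDFReal_zero_one_s2 : gaussianPDFReal 0 1 = stdNormalPDF := by
  ext x
  simp [gaussianPDFReal, stdNormalPDF]

lemma stdNormalPDF_neg (x : ℝ) : stdNormalPDF (-x) = stdNormalPDF x := by
  simp [stdNormalPDF]

lemma hasDerivAt_stdNormalPDF (x : ℝ) : HasDerivAt stdNormalPDF (-x * stdNormalPDF x) x := by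
  refine ((((hasDerivAt_pow 2 x).neg.div_const 2).exp).const_mul (√(2 * π))⁻¹).congr_deriv ?_
  simp only [stdNormalPDF]
  norm_num
  ring

lemma integrable_pow_mul_stdNormalPDF (k : ℕ) : Integrable fun x ↦ x ^ k * stdNormalPDF x := by
  have := (integrable_rpow_mul_exp_neg_mul_sq (b := 1 / 2) (by norm_num)
    (s := k) (by linarith [k.cast_nonneg (α := ℝ)])).mul_const (√(2 * π))⁻¹
  refine this.congr (.of_forall fun x ↦ ?_)
  simp only [stdNormalPDF, Real.rpow_natCast]
  ring_nf

lemma integrable_stdNormalPDF : Integrable stdNormalPDF :=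
  gaussianPDFReal_zero_one_s2 ▸ integrable_gaussianPDFReal 0 1

lemma integral_Ioi_neg_stdNormalPDF (d : ℝ) :
    ∫ x in Ioi (-d), stdNormalPDF x = stdNormalCDF d := by
  have h := integral_comp_neg_Ioi (-d) stdNormalPDF
  simp only [stdNormalPDF_neg, neg_neg] at h
  exact h

lemma integral_Ioi_neg_add_sq_mul_stdNormalPDF (d : ℝ) :
    ∫ x in Ioi (-d), (x + d) ^ 2 * stdNormalPDF x
      = (d ^ 2 + 1) * stdNormalCDF d + d * stdNormalPDF d := by
  have hF (x : ℝ) : HasDerivAt (fun x ↦ -(x + 2 * d) * stdNormalPDF x)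
      ((x ^ 2 + 2 * d * x - 1) * stdNormalPDF x) x :=
    (((hasDerivAt_id x).add_const (2 * d)).neg.mul (hasDerivAt_stdNormalPDF x)).congr_deriv
      (by simp only [id, Pi.neg_apply]; ring)
  have hφ := integrable_stdNormalPDF
  have hxφ := integrable_pow_mul_stdNormalPDF 1
  have hF'int : Integrable fun x ↦ (x ^ 2 + 2 * d * x - 1) * stdNormalPDF x := by
    refine (((integrable_pow_mul_stdNormalPDF 2).add (hxφ.const_mul (2 * d))).sub hφ).congr
      (.of_forall fun x ↦ ?_)
    simp only [Pi.add_apply, Pi.sub_apply]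
    ring
  have hFint : Integrable fun x ↦ -(x + 2 * d) * stdNormalPDF x := by
    refine ((hxφ.add (hφ.const_mul (2 * d))).neg).congr (.of_forall fun x ↦ ?_)
    simp only [Pi.add_apply, Pi.neg_apply]
    ring
  have hFTC := integral_Ioi_of_hasDerivAt_of_tendsto' (a := -d) (fun x _ ↦ hF x)
    hF'int.integrableOn (tendsto_zero_of_hasDerivAt_of_integrableOn_Ioi (a := 0)
      (fun x _ ↦ hF x) hF'int.integrableOn hFint.integrableOn)
  calc ∫ x in Ioi (-d), (x + d) ^ 2 * stdNormalPDF x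
      = ∫ x in Ioi (-d), ((x ^ 2 + 2 * d * x - 1) * stdNormalPDF x
          + (d ^ 2 + 1) * stdNormalPDF x) := by
        congr 1 with x
        ring
    _ = (d ^ 2 + 1) * stdNormalCDF d + d * stdNormalPDF d := by
        rw [integral_add hF'int.integrableOn (hφ.integrableOn.const_mul _), hFTC,
          integral_const_mul, integral_Ioi_neg_stdNormalPDF, stdNormalPDF_neg]
        ring

lemma integral_max_add_zero_sq_gaussianReal_zero_one (d : ℝ) :
    ∫ x, max (x + d) 0 ^ 2 ∂gaussianReal 0 1
      = (d ^ 2 + 1) * stdNormalCDF d + d * stdNormalPDF d := by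
  rw [integral_gaussianReal_eq_integral_smul one_ne_zero, gaussianPDFReal_zero_one_s2,
    ← integral_Ioi_neg_add_sq_mul_stdNormalPDF,
    ← setIntegral_eq_integral_of_forall_compl_eq_zero (s := Ioi (-d))]
  · refine setIntegral_congr_fun measurableSet_Ioi fun x hx ↦ ?_
    rw [smul_eq_mul, max_eq_left (by linarith [mem_Ioi.mp hx]), mul_comm]
  · intro x hx
    rw [mem_Ioi, not_lt] at hx
    rw [max_eq_right (by linarith)]
    simp

lemma gaussianReal_eq_map_gaussianReal_zero_one (μ : ℝ) (v : ℝ≥0) :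
    gaussianReal μ v = (gaussianReal 0 1).map (fun z ↦ √v * z + μ) := by
  rw [show (fun z ↦ √v * z + μ) = (· + μ) ∘ (√v * ·) from rfl,
    ← Measure.map_map (measurable_add_const μ) (measurable_const_mul _),
    gaussianReal_map_const_mul, gaussianReal_map_add_const]
  congr
  · ring
  · ext; simp

lemma integral_max_sub_zero_sq_gaussianReal (μ c : ℝ) {v : ℝ≥0} (hv : v ≠ 0) :
    ∫ x, max (x - c) 0 ^ 2 ∂gaussianReal μ v
      = ((μ - c) ^ 2 + v) * stdNormalCDF ((μ - c) / √v)
        + (μ - c) * √(v / (2 * π)) * exp (-(μ - c) ^ 2 / (2 * v)) := by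
  have hv' : (0 : ℝ) < v := by positivity
  have hs : 0 < √(v : ℝ) := sqrt_pos.mpr hv'
  set d := (μ - c) / √(v : ℝ)
  have hscale (z : ℝ) : max (√v * z + μ - c) 0 ^ 2 = v * max (z + d) 0 ^ 2 := by
    rw [show √v * z + μ - c = √v * (z + d) by simp only [d]; field_simp; ring,
      show max (√v * (z + d)) 0 = √v * max (z + d) 0 by
        rw [mul_max_of_nonneg _ _ hs.le, mul_zero],
      mul_pow, sq_sqrt hv'.le]
  have hcont : Continuous fun x ↦ max (x - c) 0 ^ 2 := by fun_prop
  rw [gaussianReal_eq_map_gaussianReal_zero_one,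
    integral_map (by fun_prop) hcont.aestronglyMeasurable]
  simp only [hscale]
  rw [integral_const_mul, integral_max_add_zero_sq_gaussianReal_zero_one]
  have hd2 : (v : ℝ) * d ^ 2 = (μ - c) ^ 2 := by
    simp only [d]
    field_simp
    rw [sq_sqrt hv'.le, mul_comm]
  have hexp : -(d ^ 2) / 2 = -(μ - c) ^ 2 / (2 * v) := by
    rw [← hd2]
    field_simp
  rw [stdNormalPDF, hexp, sqrt_div hv'.le]
  simp only [d]
  field_simp
  rw [sq_sqrt hv'.le]
  ring

lemma integrable_max_sub_zero_sq_gaussianReal (μ c : ℝ) (v : ℝ≥0) :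
    Integrable (fun x ↦ max (x - c) 0 ^ 2) (gaussianReal μ v) :=
  ((memLp_id_gaussianReal' 2 (by norm_num)).sub (memLp_const c)).pos_part.integrable_sq

theorem expected_penalty_cost_gaussian_general
    {Ω : Type*} [MeasureSpace Ω] (P : Measure Ω)
    (Y : Ω → ℝ) (m : ℝ) (q : ℝ≥0) (hq : 0 < q) (xbar a b : ℝ)
    (hY : P.map Y = gaussianReal m q) :
    (∫ ω, (a * Y ω + b * (max (Y ω - xbar) 0) ^ 2) ∂P) =
      a * m + b * (((m - xbar) ^ 2 + (q : ℝ)) * stdNormalCDF ((m - xbar) / Real.sqrt q)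
        + (m - xbar) * Real.sqrt ((q : ℝ) / (2 * Real.pi)) *
          Real.exp (-((m - xbar) ^ 2) / (2 * (q : ℝ)))) := by
  have hYm : AEMeasurable Y P :=
    .of_map_ne_zero (by rw [hY]; exact IsProbabilityMeasure.ne_zero _)
  rw [← integral_map (f := fun x ↦ a * x + b * max (x - xbar) 0 ^ 2) hYm (by fun_prop), hY,
    integral_add (((memLp_id_gaussianReal 1).integrable le_rfl).const_mul (f := fun x ↦ x) a)
      ((integrable_max_sub_zero_sq_gaussianReal m xbar q).const_mul b),
    integral_const_mul, integral_const_mul, integral_id_gaussianReal,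
    integral_max_sub_zero_sq_gaussianReal m xbar hq.ne']

/-- Expected linear cost plus quadratic penalty above a threshold, for a Gaussian. -/
theorem expected_penalty_cost_gaussian
    {Ω : Type*} [MeasureSpace Ω] (P : Measure Ω) [IsProbabilityMeasure P]
    (Y : Ω → ℝ) (m : ℝ) (q : ℝ≥0) (hq : 0 < q) (xbar a b : ℝ)
    (ha : 0 ≤ a) (hb : 0 ≤ b)
    (hY : P.map Y = gaussianReal m q) :
    (∫ ω, (a * Y ω + b * (max (Y ω - xbar) 0) ^ 2) ∂P) =
      a * m + b * (((m - xbar) ^ 2 + (q : ℝ)) * stdNormalCDF ((m - xbar) / Real.sqrt q)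
        + (m - xbar) * Real.sqrt ((q : ℝ) / (2 * Real.pi)) *
          Real.exp (-((m - xbar) ^ 2) / (2 * (q : ℝ)))) :=
  expected_penalty_cost_gaussian_general P Y m q hq xbar a b hY
end

section
/- Let E be a random vector in ℝ^d with law μ whose support contains at least N points (N ≥ 2), and with finite p-th moment. Then the L^p optimal quantization error at level N is strictly smaller than at level N-1: D_{N,p}(E) < D_{N-1,p}(E). -/
open MeasureTheory Metric

/-- The `L^p` optimal quantization error at level `N` of a law `μ` on `ℝ^d`. -/
noncomputable def quantError {d : ℕ} (μ : Measure (EuclideanSpace ℝ (Fin d)))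
    (p : ℝ) (N : ℕ) : ℝ :=
  sInf { e : ℝ | ∃ Γ : Finset (EuclideanSpace ℝ (Fin d)), Γ.Nonempty ∧ Γ.card ≤ N ∧
    e = (∫ y, Metric.infDist y (Γ : Set (EuclideanSpace ℝ (Fin d))) ^ p ∂μ) ^ (1 / p) }

/-! Fix `N` points of the support at mutual distance at least `r > 0`. By pigeonhole, a codebook
`Γ` with fewer than `N` points leaves one of them, `x`, at distance at least `r / 2`; adding `x`
to `Γ` then lowers the distortion `∫ d(y, Γ)^p` by at least `((r/3)^p - (r/6)^p) μ(B(x, r/6))`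
on the ball `B(x, r/6)`. This gain is bounded below by some `δ > 0` independently of `Γ`, so
`D_N^p ≤ D_{N-1}^p - δ`. -/

lemma Finset.exists_pos_forall_le {ι : Type*} (S : Finset ι) {f : ι → ℝ}
    (hf : ∀ i ∈ S, 0 < f i) : ∃ δ > 0, ∀ i ∈ S, δ ≤ f i := by
  rcases S.eq_empty_or_nonempty with rfl | hS
  · exact ⟨1, one_pos, by simp⟩
  · obtain ⟨j, hj, hmin⟩ := S.exists_min_image f hS
    exact ⟨f j, hf j hj, hmin⟩

lemma Finset.exists_pos_forall_le_dist {X : Type*} [MetricSpace X] [DecidableEq X]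
    (S : Finset X) : ∃ r > 0, ∀ x ∈ S, ∀ y ∈ S, x ≠ y → r ≤ dist x y := by
  rcases S.offDiag.eq_empty_or_nonempty with hS | hS
  · refine ⟨1, one_pos, fun x hx y hy hxy => ?_⟩
    have : (x, y) ∈ S.offDiag := Finset.mem_offDiag.2 ⟨hx, hy, hxy⟩
    simp [hS] at this
  · obtain ⟨q, hq, hmin⟩ := S.offDiag.exists_min_image (fun q => dist q.1 q.2) hS
    refine ⟨_, dist_pos.2 (Finset.mem_offDiag.1 hq).2.2, fun x hx y hy hxy => ?_⟩
    exact hmin (x, y) (Finset.mem_offDiag.2 ⟨hx, hy, hxy⟩)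

lemma Real.add_rpow_le_two_rpow_mul_rpow_add_rpow {a b p : ℝ} (ha : 0 ≤ a) (hb : 0 ≤ b)
    (hp : 0 ≤ p) : (a + b) ^ p ≤ 2 ^ p * (a ^ p + b ^ p) := calc
  (a + b) ^ p ≤ (2 * max a b) ^ p := by
    gcongr
    rw [two_mul]
    exact add_le_add (le_max_left a b) (le_max_right a b)
  _ = 2 ^ p * max a b ^ p := Real.mul_rpow zero_le_two (ha.trans (le_max_left a b))
  _ ≤ 2 ^ p * (a ^ p + b ^ p) := by
    gcongr
    rcases max_choice a b with h | h <;> rw [h]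
    · linarith [Real.rpow_nonneg hb p]
    · linarith [Real.rpow_nonneg ha p]

section PseudoMetric

variable {X : Type*} [PseudoMetricSpace X]

lemma exists_mem_le_infDist_of_card_lt {S Γ : Finset X} {r : ℝ}
    (hS : ∀ x ∈ S, ∀ y ∈ S, x ≠ y → r ≤ dist x y) (hΓ : Γ.Nonempty)
    (hcard : Γ.card < S.card) : ∃ x ∈ S, r / 2 ≤ infDist x (Γ : Set X) := by
  by_contra! hclose
  choose! f hfΓ hf using fun x hx =>
    (infDist_lt_iff (Finset.coe_nonempty.2 hΓ)).1 (hclose x hx)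
  obtain ⟨x, hx, y, hy, hxy, hfxy⟩ := Finset.exists_ne_map_eq_of_card_lt_of_maps_to hcard hfΓ
  have := dist_triangle_right x y (f y)
  linarith [hS x hx y hy hxy, hfxy ▸ hf x hx, hf y hy]

variable [MeasurableSpace X] {μ : Measure X} {p : ℝ}

lemma integral_infDist_rpow_nonneg (μ : Measure X) (p : ℝ) (s : Set X) :
    0 ≤ ∫ y, infDist y s ^ p ∂μ :=
  integral_nonneg fun _ => Real.rpow_nonneg infDist_nonneg p

variable [OpensMeasurableSpace X]

lemma integral_infDist_rpow_insert_add_le [IsFiniteMeasure μ] (hp : 0 ≤ p) {s : Set X}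
    (hs : s.Nonempty) (hint : Integrable (fun y => infDist y s ^ p) μ) {x : X} {ρ : ℝ}
    (hx : 3 * ρ ≤ infDist x s) :
    ∫ y, infDist y (insert x s) ^ p ∂μ + ((2 * ρ) ^ p - ρ ^ p) * μ.real (ball x ρ) ≤
      ∫ y, infDist y s ^ p ∂μ := by
  set f := fun y => infDist y s ^ p
  set g := fun y => infDist y (insert x s) ^ p
  have hgf : ∀ y, g y ≤ f y := fun y => Real.rpow_le_rpow infDist_nonneg
    (infDist_le_infDist_of_subset (Set.subset_insert x s) hs) hp
  have hg : Integrable g μ :=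
    hint.mono ((continuous_infDist_pt _).rpow_const fun _ => Or.inr hp).aestronglyMeasurable
      (ae_of_all _ fun y => by
        simpa only [Real.norm_eq_abs] using
          abs_le_abs_of_nonneg (Real.rpow_nonneg infDist_nonneg p) (hgf y))
  have hball : ∀ y ∈ ball x ρ, (2 * ρ) ^ p - ρ ^ p ≤ f y - g y := by
    intro y (hy : dist y x < ρ)
    have hρ : 0 ≤ ρ := dist_nonneg.trans hy.le
    have hg_le : g y ≤ ρ ^ p := Real.rpow_le_rpow infDist_nonneg
      ((infDist_le_dist_of_mem (Set.mem_insert x s)).trans hy.le) hp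
    have hle_f : (2 * ρ) ^ p ≤ f y := Real.rpow_le_rpow (by positivity)
      (by linarith [infDist_le_infDist_add_dist (x := x) (y := y) (s := s), dist_comm x y]) hp
    linarith
  calc ∫ y, g y ∂μ + ((2 * ρ) ^ p - ρ ^ p) * μ.real (ball x ρ)
      ≤ ∫ y, g y ∂μ + ∫ y in ball x ρ, (f y - g y) ∂μ :=
        (add_le_add_iff_left _).2 <| setIntegral_ge_of_const_le_real measurableSet_ball
          (measure_ne_top μ _) hball (hint.sub hg).integrableOn
    _ ≤ ∫ y, g y ∂μ + ∫ y, (f y - g y) ∂μ :=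
        (add_le_add_iff_left _).2 <| setIntegral_le_integral (hint.sub hg)
          (ae_of_all _ fun y => sub_nonneg.2 (hgf y))
    _ = ∫ y, f y ∂μ := by rw [integral_sub hint hg]; ring

end PseudoMetric

lemma exists_pos_forall_integral_infDist_rpow_insert_add_le {X : Type*} [MetricSpace X]
    [MeasurableSpace X] [OpensMeasurableSpace X] {μ : Measure X} [IsFiniteMeasure μ] {p : ℝ}
    (hp : 0 < p) (S : Finset X) (hS : ∀ x ∈ S, ∀ ε > 0, μ (ball x ε) ≠ 0) :
    ∃ δ > 0, ∀ Γ : Finset X, Γ.Nonempty → Γ.card < S.card →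
      Integrable (fun y => infDist y (Γ : Set X) ^ p) μ →
      ∃ x ∈ S, ∫ y, infDist y (insert x (Γ : Set X)) ^ p ∂μ + δ ≤
        ∫ y, infDist y (Γ : Set X) ^ p ∂μ := by
  classical
  obtain ⟨r, hr, hsep⟩ := S.exists_pos_forall_le_dist
  have hρ : 0 < r / 6 := by positivity
  obtain ⟨m, hm, hball⟩ := S.exists_pos_forall_le (f := fun x => μ.real (ball x (r / 6)))
    fun x hx => ENNReal.toReal_pos (hS x hx _ hρ) (measure_ne_top μ _)
  have hgain : 0 < (2 * (r / 6)) ^ p - (r / 6) ^ p :=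
    sub_pos.2 (Real.rpow_lt_rpow hρ.le (by linarith) hp)
  refine ⟨_, mul_pos hgain hm, fun Γ hΓ hcard hint => ?_⟩
  obtain ⟨x, hxS, hx⟩ := exists_mem_le_infDist_of_card_lt hsep hΓ hcard
  have hx' : 3 * (r / 6) ≤ infDist x (Γ : Set X) := by linarith
  refine ⟨x, hxS, le_trans ?_
    (integral_infDist_rpow_insert_add_le hp.le (Finset.coe_nonempty.2 hΓ) hint hx')⟩
  exact (add_le_add_iff_left _).2 (mul_le_mul_of_nonneg_left (hball x hxS) hgain.le)

lemma integrable_infDist_rpow {E : Type*} [NormedAddCommGroup E] [MeasurableSpace E]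
    [OpensMeasurableSpace E] {μ : Measure E} [IsFiniteMeasure μ] {p : ℝ} (hp : 0 ≤ p)
    (hmom : Integrable (fun y => ‖y‖ ^ p) μ) {s : Set E} (hs : s.Nonempty) :
    Integrable (fun y => infDist y s ^ p) μ := by
  obtain ⟨a, ha⟩ := hs
  refine ((hmom.add (integrable_const (‖a‖ ^ p))).const_mul (2 ^ p)).mono'
    ((continuous_infDist_pt s).rpow_const fun _ => Or.inr hp).aestronglyMeasurable
    (ae_of_all _ fun y => ?_)
  rw [Real.norm_of_nonneg (Real.rpow_nonneg infDist_nonneg p)]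
  calc infDist y s ^ p ≤ (‖y‖ + ‖a‖) ^ p := Real.rpow_le_rpow infDist_nonneg
        ((infDist_le_dist_of_mem ha).trans (dist_le_norm_add_norm y a)) hp
    _ ≤ 2 ^ p * (‖y‖ ^ p + ‖a‖ ^ p) :=
        Real.add_rpow_le_two_rpow_mul_rpow_add_rpow (norm_nonneg y) (norm_nonneg a) hp

section QuantError

variable {d : ℕ} {μ : Measure (EuclideanSpace ℝ (Fin d))} {p : ℝ}

lemma quantError_nonneg (μ : Measure (EuclideanSpace ℝ (Fin d))) (p : ℝ) (n : ℕ) :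
    0 ≤ quantError μ p n :=
  Real.sInf_nonneg fun _ ⟨_, _, _, he⟩ =>
    he ▸ Real.rpow_nonneg (integral_infDist_rpow_nonneg μ p _) _

lemma quantError_le {n : ℕ} {Γ : Finset (EuclideanSpace ℝ (Fin d))} (hΓ : Γ.Nonempty)
    (hcard : Γ.card ≤ n) :
    quantError μ p n ≤
      (∫ y, infDist y (Γ : Set (EuclideanSpace ℝ (Fin d))) ^ p ∂μ) ^ (1 / p) :=
  csInf_le ⟨0, fun _ ⟨_, _, _, he⟩ => he ▸ Real.rpow_nonneg (integral_infDist_rpow_nonneg μ p _) _⟩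
    ⟨Γ, hΓ, hcard, rfl⟩

lemma quantError_lt_of_forall_exists_add_le (hp : 0 < p) {m n : ℕ} (hm : 1 ≤ m) {δ : ℝ}
    (hδ : 0 < δ)
    (h : ∀ Γ : Finset (EuclideanSpace ℝ (Fin d)), Γ.Nonempty → Γ.card ≤ m →
      ∃ Γ' : Finset (EuclideanSpace ℝ (Fin d)), Γ'.Nonempty ∧ Γ'.card ≤ n ∧
        ∫ y, infDist y (Γ' : Set (EuclideanSpace ℝ (Fin d))) ^ p ∂μ + δ ≤
          ∫ y, infDist y (Γ : Set (EuclideanSpace ℝ (Fin d))) ^ p ∂μ) :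
    quantError μ p n < quantError μ p m := by
  set D := quantError μ p n
  have hD : 0 ≤ D := quantError_nonneg μ p n
  have hlb : (D ^ p + δ) ^ (1 / p) ≤ quantError μ p m := by
    refine le_csInf ⟨_, {0}, Finset.singleton_nonempty 0, by simpa using hm, rfl⟩ ?_
    rintro _ ⟨Γ, hΓ, hcard, rfl⟩
    obtain ⟨Γ', hΓ', hcard', hle⟩ := h Γ hΓ hcard
    have hDp : D ^ p ≤ ∫ y, infDist y (Γ' : Set (EuclideanSpace ℝ (Fin d))) ^ p ∂μ := by
      have := Real.rpow_le_rpow hD (quantError_le hΓ' hcard') hp.le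
      rwa [← Real.rpow_mul (integral_infDist_rpow_nonneg μ p _), one_div_mul_cancel hp.ne',
        Real.rpow_one] at this
    exact Real.rpow_le_rpow (by positivity) (by linarith) (by positivity)
  calc D = (D ^ p) ^ (1 / p) := by
        rw [← Real.rpow_mul hD, mul_one_div_cancel hp.ne', Real.rpow_one]
    _ < (D ^ p + δ) ^ (1 / p) := Real.rpow_lt_rpow (by positivity) (by linarith) (by positivity)
    _ ≤ quantError μ p m := hlb

end QuantError

/-- Strict decrease of the optimal quantization error: if the support of `μ` contains
at least `N ≥ 2` points and `μ` has finite `p`-th moment, then `D_{N,p} < D_{N-1,p}`. -/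
theorem quantError_strict_decreasing {d : ℕ}
    (μ : Measure (EuclideanSpace ℝ (Fin d))) [IsProbabilityMeasure μ]
    (p : ℝ) (hp : 1 ≤ p)
    (hmom : Integrable (fun y => ‖y‖ ^ p) μ)
    (N : ℕ) (hN : 2 ≤ N)
    (hsupp : ∃ S : Finset (EuclideanSpace ℝ (Fin d)), S.card = N ∧
      ∀ x ∈ S, ∀ ε > 0, μ (Metric.ball x ε) ≠ 0) :
    quantError μ p N < quantError μ p (N - 1) := by
  classical
  obtain ⟨S, rfl, hS⟩ := hsupp
  have hp0 : 0 < p := by linarith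
  obtain ⟨δ, hδ, hgain⟩ := exists_pos_forall_integral_infDist_rpow_insert_add_le hp0 S hS
  refine quantError_lt_of_forall_exists_add_le hp0 (by omega) hδ fun Γ hΓ hcard => ?_
  obtain ⟨x, -, hx⟩ := hgain Γ hΓ (by omega)
    (integrable_infDist_rpow hp0.le hmom (Finset.coe_nonempty.2 hΓ))
  refine ⟨insert x Γ, Finset.insert_nonempty x Γ,
    (Finset.card_insert_le x Γ).trans (by omega), ?_⟩
  rwa [Finset.coe_insert]
end

section
/- If V: ℝ^d → ℝ is differentiable with K-Lipschitz gradient, E ∈ L²(ℝ^d), and Ê* is a stationary quantizer of E (E[E | Ê*] = Ê*), then |E[V(E)] - E[V(Ê*)]| ≤ (K/2) · E[|E - Ê*|²]. -/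
/-!
A `K`-Lipschitz gradient gives the first-order Taylor bound
`|V x - V y - ⟪∇V y, x - y⟫| ≤ K / 2 * ‖x - y‖ ^ 2`. Taken at `x = X`, `y = Xq` and integrated,
the first-order term vanishes: `∇V Xq` is bounded and `σ(Xq)`-measurable, so it pulls out of the
conditional expectation given `Xq`, and stationarity makes `E[X - Xq | Xq] = 0`.
-/

open MeasureTheory

theorem norm_sub_sub_fderiv_le_of_lipschitzWith {E G : Type*} [NormedAddCommGroup E]
    [NormedSpace ℝ E] [NormedAddCommGroup G] [NormedSpace ℝ G]
    {f : E → G} {f' : E → E →L[ℝ] G} {K : NNReal}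
    (hf : ∀ x, HasFDerivAt f (f' x) x) (hf' : LipschitzWith K f') (x y : E) :
    ‖f x - f y - f' y (x - y)‖ ≤ K / 2 * ‖x - y‖ ^ 2 := by
  set g : ℝ → G := fun t => f (y + t • (x - y)) - f y - t • f' y (x - y)
  have hg : ∀ t, HasDerivAt g (f' (y + t • (x - y)) (x - y) - f' y (x - y)) t := by
    intro t
    have hline : HasDerivAt (fun t : ℝ => y + t • (x - y)) (x - y) t := by
      simpa using ((hasDerivAt_id t).smul_const (x - y)).const_add y
    exact (((hf _).comp_hasDerivAt t hline).sub_const (f y)).sub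
      (by simpa using (hasDerivAt_id t).smul_const (f' y (x - y)))
  have hg' : ∀ t ∈ Set.Ico (0 : ℝ) 1,
      ‖f' (y + t • (x - y)) (x - y) - f' y (x - y)‖ ≤ K * ‖x - y‖ ^ 2 * t := by
    intro t ht
    calc ‖f' (y + t • (x - y)) (x - y) - f' y (x - y)‖
        ≤ ‖f' (y + t • (x - y)) - f' y‖ * ‖x - y‖ :=
          (f' (y + t • (x - y)) - f' y).le_opNorm (x - y)
      _ ≤ K * ‖t • (x - y)‖ * ‖x - y‖ := by
          gcongr; simpa using hf'.norm_sub_le (y + t • (x - y)) y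
      _ = K * ‖x - y‖ ^ 2 * t := by
          rw [norm_smul, Real.norm_of_nonneg ht.1]; ring
  have hB : ∀ t, HasDerivAt (fun t : ℝ => K / 2 * ‖x - y‖ ^ 2 * t ^ 2) (K * ‖x - y‖ ^ 2 * t) t := by
    intro t
    exact ((hasDerivAt_pow 2 t).const_mul (K / 2 * ‖x - y‖ ^ 2)).congr_deriv (by push_cast; ring)
  simpa [g] using image_norm_le_of_norm_deriv_right_le_deriv_boundary (a := 0) (b := 1)
    (fun t _ => (hg t).continuousAt.continuousWithinAt) (fun t _ => (hg t).hasDerivWithinAt)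
    (by simp [g]) hB hg' (Set.right_mem_Icc.2 zero_le_one)

theorem abs_sub_sub_inner_le_of_lipschitzWith_gradient {F : Type*} [NormedAddCommGroup F]
    [InnerProductSpace ℝ F] [CompleteSpace F] {V : F → ℝ} {V' : F → F} {K : NNReal}
    (hV : ∀ x, HasGradientAt V (V' x) x) (hV' : LipschitzWith K V') (x y : F) :
    |V x - V y - inner ℝ (V' y) (x - y)| ≤ K / 2 * ‖x - y‖ ^ 2 := by
  have hdual : LipschitzWith K (fun x => InnerProductSpace.toDual ℝ F (V' x)) := by
    refine LipschitzWith.of_dist_le_mul fun a b => ?_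
    rw [dist_eq_norm, ← map_sub, LinearIsometryEquiv.norm_map, ← dist_eq_norm]
    exact hV'.dist_le_mul a b
  simpa using norm_sub_sub_fderiv_le_of_lipschitzWith (fun x => (hV x).hasFDerivAt) hdual x y

section PullOut

variable {Ω E F G : Type*} {m mΩ : MeasurableSpace Ω} {μ : Measure Ω} [IsFiniteMeasure μ]
  [NormedAddCommGroup E] [NormedSpace ℝ E] [CompleteSpace E]
  [NormedAddCommGroup F] [NormedSpace ℝ F]
  [NormedAddCommGroup G] [NormedSpace ℝ G] [CompleteSpace G]
  (B : F →L[ℝ] E →L[ℝ] G)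

theorem integral_bilin_condExp_of_bound (hm : m ≤ mΩ) {f : Ω → F} {g : Ω → E}
    (hf : StronglyMeasurable[m] f) (c : ℝ) (hfc : ∀ᵐ ω ∂μ, ‖f ω‖ ≤ c) (hg : Integrable g μ) :
    ∫ ω, B (f ω) (μ[g | m] ω) ∂μ = ∫ ω, B (f ω) (g ω) ∂μ := by
  rw [← integral_condExp hm (f := fun ω => B (f ω) (g ω))]
  exact integral_congr_ae (condExp_stronglyMeasurable_bilin_of_bound B hm hf hg c hfc).symm

theorem integral_bilin_sub_eq_zero_of_condExp_ae_eq (hm : m ≤ mΩ) {f : Ω → F} {X Y : Ω → E}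
    (hf : StronglyMeasurable[m] f) (c : ℝ) (hfc : ∀ᵐ ω ∂μ, ‖f ω‖ ≤ c)
    (hX : Integrable X μ) (hY : Integrable Y μ) (hXY : μ[X | m] =ᵐ[μ] Y) :
    ∫ ω, B (f ω) (X ω - Y ω) ∂μ = 0 := by
  have hfμ : AEStronglyMeasurable f μ := (hf.mono hm).aestronglyMeasurable
  simp_rw [map_sub]
  rw [integral_sub (B.integrable_of_bilin_of_bdd_left c hfμ hfc hX)
    (B.integrable_of_bilin_of_bdd_left c hfμ hfc hY),
    ← integral_bilin_condExp_of_bound B hm hf c hfc hX,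
    integral_congr_ae (hXY.mono fun ω h => by rw [h]), sub_self]

end PullOut

theorem exists_norm_le_of_finite_range {α E : Type*} [Norm E] {f : α → E}
    (h : (Set.range f).Finite) : ∃ C, ∀ a, ‖f a‖ ≤ C := by
  obtain ⟨C, hC⟩ := (h.image norm).bddAbove
  exact ⟨C, fun a => hC ⟨f a, Set.mem_range_self a, rfl⟩⟩

theorem stationary_quantizer_second_order_bound_general {d : ℕ} {Ω : Type*} [MeasureSpace Ω]
    (P : Measure Ω) [IsProbabilityMeasure P]
    (X Xq : Ω → EuclideanSpace ℝ (Fin d))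
    (hXint : Integrable X P)
    (hfin : (Set.range Xq).Finite)
    (hXqmeas : Measurable Xq)
    (hstat : P[X | MeasurableSpace.comap Xq inferInstance] =ᵐ[P] Xq)
    (K : NNReal) (V : EuclideanSpace ℝ (Fin d) → ℝ)
    (V' : EuclideanSpace ℝ (Fin d) → EuclideanSpace ℝ (Fin d))
    (hV : ∀ x, HasGradientAt V (V' x) x) (hV' : LipschitzWith K V')
    (hVX : Integrable (fun ω => V (X ω)) P)
    (hVXq : Integrable (fun ω => V (Xq ω)) P)
    (hd2 : Integrable (fun ω => ‖X ω - Xq ω‖ ^ 2) P) :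
    |(∫ ω, V (X ω) ∂P) - ∫ ω, V (Xq ω) ∂P| ≤
      (K : ℝ) / 2 * ∫ ω, ‖X ω - Xq ω‖ ^ 2 ∂P := by
  obtain ⟨C, hC⟩ := exists_norm_le_of_finite_range hfin
  obtain ⟨D, hD⟩ := exists_norm_le_of_finite_range (f := V' ∘ Xq)
    (Set.range_comp V' Xq ▸ hfin.image V')
  have hXq : Integrable Xq P := .of_bound hXqmeas.aestronglyMeasurable C (ae_of_all _ hC)
  have hgrad : StronglyMeasurable[MeasurableSpace.comap Xq inferInstance] (V' ∘ Xq) :=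
    (hV'.continuous.measurable.comp (comap_measurable Xq)).stronglyMeasurable
  have hlin : Integrable (fun ω => inner ℝ (V' (Xq ω)) (X ω - Xq ω)) P :=
    (innerSL ℝ).integrable_of_bilin_of_bdd_left D (hgrad.mono hXqmeas.comap_le).aestronglyMeasurable
      (ae_of_all _ hD) (hXint.sub hXq)
  have horth : ∫ ω, inner ℝ (V' (Xq ω)) (X ω - Xq ω) ∂P = 0 :=
    integral_bilin_sub_eq_zero_of_condExp_ae_eq (innerSL ℝ) hXqmeas.comap_le hgrad D
      (ae_of_all _ hD) hXint hXq hstat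
  calc |(∫ ω, V (X ω) ∂P) - ∫ ω, V (Xq ω) ∂P|
      = ‖∫ ω, (V (X ω) - V (Xq ω) - inner ℝ (V' (Xq ω)) (X ω - Xq ω)) ∂P‖ := by
        have hdiff : Integrable (fun ω => V (X ω) - V (Xq ω)) P := hVX.sub hVXq
        rw [integral_sub hdiff hlin, integral_sub hVX hVXq, horth, sub_zero,
          Real.norm_eq_abs]
    _ ≤ ∫ ω, (K : ℝ) / 2 * ‖X ω - Xq ω‖ ^ 2 ∂P :=
        norm_integral_le_of_norm_le (hd2.const_mul _) (ae_of_all _ fun ω =>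
          abs_sub_sub_inner_le_of_lipschitzWith_gradient hV hV' (X ω) (Xq ω))
    _ = (K : ℝ) / 2 * ∫ ω, ‖X ω - Xq ω‖ ^ 2 ∂P := integral_const_mul _ _

/-- Second-order cubature error bound for a stationary quantizer, for `V` with
Lipschitz gradient. -/
theorem stationary_quantizer_second_order_bound {d : ℕ} {Ω : Type*} [MeasureSpace Ω]
    (P : Measure Ω) [IsProbabilityMeasure P]
    (X Xq : Ω → EuclideanSpace ℝ (Fin d))
    (hX2 : Integrable (fun ω => ‖X ω‖ ^ 2) P) (hXint : Integrable X P)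
    (hfin : (Set.range Xq).Finite)
    (hXqmeas : Measurable Xq)
    (hstat : P[X | MeasurableSpace.comap Xq inferInstance] =ᵐ[P] Xq)
    (K : NNReal) (V : EuclideanSpace ℝ (Fin d) → ℝ)
    (V' : EuclideanSpace ℝ (Fin d) → EuclideanSpace ℝ (Fin d))
    (hV : ∀ x, HasGradientAt V (V' x) x) (hV' : LipschitzWith K V')
    (hVX : Integrable (fun ω => V (X ω)) P)
    (hVXq : Integrable (fun ω => V (Xq ω)) P)
    (hd2 : Integrable (fun ω => ‖X ω - Xq ω‖ ^ 2) P) :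
    |(∫ ω, V (X ω) ∂P) - ∫ ω, V (Xq ω) ∂P| ≤
      (K : ℝ) / 2 * ∫ ω, ‖X ω - Xq ω‖ ^ 2 ∂P :=
  stationary_quantizer_second_order_bound_general P X Xq hXint hfin hXqmeas hstat K V V' hV hV' hVX
    hVXq hd2
end

section
/- In the finite-horizon MDP with finite action set and bounded costs, any policy defined by selecting, at each (n,x), a minimizer ũ*(n,x) ∈ argmin_{ν ∈ U} { Ψ(x,ν) + E[V(n+1, T(n,x,ν,E))] } is optimal: J(n, x, u*) = V(n, x) for all n and x. -/
/-!
Backward induction on the time `n`: from every state, `u*` costs no more than any measurable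
Markov policy `π`. Granted this at time `n + 1`, the value function at time `n + 1` is the cost of
`u*`, so the minimizing property of `u*` beats the first action of `π` at time `n`, and integrating
the induction hypothesis against the noise beats the remaining steps of `π`.
-/

open MeasureTheory

variable {𝒳 ℰ U : Type*}

/-- Cost-to-go of a Markov policy, with `k` steps to go before the horizon `N`:
the expected aggregated cost obtained by integrating out the i.i.d. noise. -/
noncomputable def costAux [MeasurableSpace ℰ] (N : ℕ) (T : ℕ → 𝒳 → U → ℰ → 𝒳)
    (ν : Measure ℰ) (Ψ : 𝒳 → U → ℝ) (Φ : 𝒳 → ℝ) (π : ℕ → 𝒳 → U) :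
    ℕ → 𝒳 → ℝ
  | 0, x => Φ x
  | (k + 1), x =>
      Ψ x (π (N - (k + 1)) x) +
        ∫ e, costAux N T ν Ψ Φ π k (T (N - (k + 1)) x (π (N - (k + 1)) x) e) ∂ν

/-- Expected aggregated cost `J(n, x, π)` of policy `π` started at time `n` in state `x`. -/
noncomputable def costJ [MeasurableSpace ℰ] (N : ℕ) (T : ℕ → 𝒳 → U → ℰ → 𝒳)
    (ν : Measure ℰ) (Ψ : 𝒳 → U → ℝ) (Φ : 𝒳 → ℝ) (π : ℕ → 𝒳 → U)
    (n : ℕ) (x : 𝒳) : ℝ :=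
  costAux N T ν Ψ Φ π (N - n) x

/-- Value function: infimum of the expected aggregated cost over measurable
Markov policies. -/
noncomputable def valueV [MeasurableSpace 𝒳] [MeasurableSpace U] [MeasurableSpace ℰ]
    (N : ℕ) (T : ℕ → 𝒳 → U → ℰ → 𝒳) (ν : Measure ℰ) (Ψ : 𝒳 → U → ℝ) (Φ : 𝒳 → ℝ)
    (n : ℕ) (x : 𝒳) : ℝ :=
  ⨅ π : { p : ℕ → 𝒳 → U // ∀ k, Measurable (p k) },
    costJ N T ν Ψ Φ (π : ℕ → 𝒳 → U) n x

theorem measurable_apply_of_countable {α β : Type*} [MeasurableSpace α] [MeasurableSpace β]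
    [MeasurableSpace U] [Countable U] [MeasurableSingletonClass U] {f : α → U → β}
    (hf : ∀ u, Measurable fun a => f a u) {g : α → U} (hg : Measurable g) :
    Measurable fun a => f a (g a) :=
  (measurable_from_prod_countable_left (f := fun p : α × U => f p.1 p.2) hf).comp
    (measurable_id.prodMk hg)

def IsBellmanMinimizer [MeasurableSpace 𝒳] [MeasurableSpace U] [MeasurableSpace ℰ]
    (N : ℕ) (T : ℕ → 𝒳 → U → ℰ → 𝒳) (ν : Measure ℰ) (Ψ : 𝒳 → U → ℝ) (Φ : 𝒳 → ℝ)
    (ustar : ℕ → 𝒳 → U) : Prop :=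
  ∀ n x, ∀ u : U,
    Ψ x (ustar n x) + ∫ e, valueV N T ν Ψ Φ (n + 1) (T n x (ustar n x) e) ∂ν ≤
      Ψ x u + ∫ e, valueV N T ν Ψ Φ (n + 1) (T n x u e) ∂ν

section Cost

variable [MeasurableSpace ℰ] {N : ℕ} {T : ℕ → 𝒳 → U → ℰ → 𝒳} {ν : Measure ℰ}
  {Ψ : 𝒳 → U → ℝ} {Φ : 𝒳 → ℝ} {π : ℕ → 𝒳 → U}

theorem costJ_of_le {n : ℕ} (hn : N ≤ n) (x : 𝒳) : costJ N T ν Ψ Φ π n x = Φ x := by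
  rw [costJ, Nat.sub_eq_zero_of_le hn, costAux]

theorem costJ_of_lt {n : ℕ} (hn : n < N) (x : 𝒳) :
    costJ N T ν Ψ Φ π n x =
      Ψ x (π n x) + ∫ e, costJ N T ν Ψ Φ π (n + 1) (T n x (π n x) e) ∂ν := by
  obtain ⟨k, hk⟩ : ∃ k, N - n = k + 1 := ⟨N - n - 1, by omega⟩
  have hn' : N - (k + 1) = n := by omega
  have hk' : N - (n + 1) = k := by omega
  simp only [costJ]
  rw [hk, costAux, hn', hk']

theorem abs_costAux_le [IsProbabilityMeasure ν] {CΨ CΦ : ℝ} (hΨbd : ∀ x u, |Ψ x u| ≤ CΨ)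
    (hΦbd : ∀ x, |Φ x| ≤ CΦ) (k : ℕ) (x : 𝒳) :
    |costAux N T ν Ψ Φ π k x| ≤ k * CΨ + CΦ := by
  induction k generalizing x with
  | zero => simpa [costAux] using hΦbd x
  | succ k ih =>
    have hintegral := norm_integral_le_of_norm_le_const (μ := ν) (ae_of_all _ fun e =>
      (Real.norm_eq_abs _).trans_le (ih (T (N - (k + 1)) x (π (N - (k + 1)) x) e)))
    rw [probReal_univ, mul_one] at hintegral
    calc |costAux N T ν Ψ Φ π (k + 1) x|
        ≤ |Ψ x (π (N - (k + 1)) x)| +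
            |∫ e, costAux N T ν Ψ Φ π k (T (N - (k + 1)) x (π (N - (k + 1)) x) e) ∂ν| :=
          abs_add_le _ _
      _ ≤ CΨ + (k * CΨ + CΦ) := add_le_add (hΨbd _ _) hintegral
      _ = (k + 1 : ℕ) * CΨ + CΦ := by push_cast; ring

variable [MeasurableSpace 𝒳] [MeasurableSpace U] [Countable U] [MeasurableSingletonClass U]

theorem measurable_costAux [SFinite ν] (hT : ∀ n u, Measurable (fun p : 𝒳 × ℰ => T n p.1 u p.2))
    (hΨmeas : ∀ u, Measurable (fun x => Ψ x u)) (hΦmeas : Measurable Φ)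
    (hπ : ∀ n, Measurable (π n)) (k : ℕ) : Measurable (costAux N T ν Ψ Φ π k) := by
  induction k with
  | zero => exact hΦmeas
  | succ k ih =>
    have hstep : Measurable fun p : 𝒳 × ℰ => T (N - (k + 1)) p.1 (π (N - (k + 1)) p.1) p.2 :=
      measurable_apply_of_countable (hT _) ((hπ _).comp measurable_fst)
    exact (measurable_apply_of_countable hΨmeas (hπ _)).add
      (ih.comp hstep).stronglyMeasurable.integral_prod_right'.measurable

theorem integrable_costJ_comp [IsProbabilityMeasure ν]
    (hT : ∀ n u, Measurable (fun p : 𝒳 × ℰ => T n p.1 u p.2))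
    (hΨmeas : ∀ u, Measurable (fun x => Ψ x u)) (hΦmeas : Measurable Φ)
    {CΨ CΦ : ℝ} (hΨbd : ∀ x u, |Ψ x u| ≤ CΨ) (hΦbd : ∀ x, |Φ x| ≤ CΦ)
    (hπ : ∀ n, Measurable (π n)) (n m : ℕ) (x : 𝒳) (u : U) :
    Integrable (fun e => costJ N T ν Ψ Φ π n (T m x u e)) ν :=
  .of_bound ((measurable_costAux hT hΨmeas hΦmeas hπ _).comp
      ((hT m u).comp measurable_prodMk_left)).aestronglyMeasurable _
    (ae_of_all _ fun _ => abs_costAux_le hΨbd hΦbd _ _)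

end Cost

section Optimality

variable [MeasurableSpace 𝒳] [MeasurableSpace ℰ] [MeasurableSpace U] {N : ℕ}
  {T : ℕ → 𝒳 → U → ℰ → 𝒳} {ν : Measure ℰ} {Ψ : 𝒳 → U → ℝ} {Φ : 𝒳 → ℝ} {ustar : ℕ → 𝒳 → U}

theorem valueV_eq_costJ_of_forall_le (hmeas : ∀ n, Measurable (ustar n)) {n : ℕ} {x : 𝒳}
    (hopt : ∀ π : ℕ → 𝒳 → U, (∀ m, Measurable (π m)) →
      costJ N T ν Ψ Φ ustar n x ≤ costJ N T ν Ψ Φ π n x) :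
    valueV N T ν Ψ Φ n x = costJ N T ν Ψ Φ ustar n x := by
  -- `u*` is a least element of the range, so this real infimum is not the junk value.
  have : Nonempty { p : ℕ → 𝒳 → U // ∀ k, Measurable (p k) } := ⟨⟨ustar, hmeas⟩⟩
  refine IsGLB.ciInf_eq (IsLeast.isGLB ⟨⟨⟨ustar, hmeas⟩, rfl⟩, ?_⟩)
  rintro _ ⟨π, rfl⟩
  exact hopt π π.2

variable [Countable U] [MeasurableSingletonClass U] [IsProbabilityMeasure ν]

theorem costJ_le_of_isBellmanMinimizer
    (hT : ∀ n u, Measurable (fun p : 𝒳 × ℰ => T n p.1 u p.2))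
    (hΨmeas : ∀ u, Measurable (fun x => Ψ x u)) (hΦmeas : Measurable Φ)
    {CΨ CΦ : ℝ} (hΨbd : ∀ x u, |Ψ x u| ≤ CΨ) (hΦbd : ∀ x, |Φ x| ≤ CΦ)
    (hmeas : ∀ n, Measurable (ustar n)) (hmin : IsBellmanMinimizer N T ν Ψ Φ ustar)
    (n : ℕ) (π : ℕ → 𝒳 → U) (hπ : ∀ m, Measurable (π m)) (x : 𝒳) :
    costJ N T ν Ψ Φ ustar n x ≤ costJ N T ν Ψ Φ π n x := by
  rcases le_or_gt N n with hn | hn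
  · rw [costJ_of_le hn, costJ_of_le hn]
  have ih : ∀ π' : ℕ → 𝒳 → U, (∀ m, Measurable (π' m)) → ∀ y,
      costJ N T ν Ψ Φ ustar (n + 1) y ≤ costJ N T ν Ψ Φ π' (n + 1) y :=
    costJ_le_of_isBellmanMinimizer hT hΨmeas hΦmeas hΨbd hΦbd hmeas hmin (n + 1)
  have hV : ∀ y, valueV N T ν Ψ Φ (n + 1) y = costJ N T ν Ψ Φ ustar (n + 1) y :=
    fun y => valueV_eq_costJ_of_forall_le hmeas fun π' hπ' => ih π' hπ' y
  calc costJ N T ν Ψ Φ ustar n x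
      = Ψ x (ustar n x) + ∫ e, valueV N T ν Ψ Φ (n + 1) (T n x (ustar n x) e) ∂ν := by
        simp only [costJ_of_lt hn, hV]
    _ ≤ Ψ x (π n x) + ∫ e, valueV N T ν Ψ Φ (n + 1) (T n x (π n x) e) ∂ν := hmin n x _
    _ = Ψ x (π n x) + ∫ e, costJ N T ν Ψ Φ ustar (n + 1) (T n x (π n x) e) ∂ν := by
        simp only [hV]
    _ ≤ Ψ x (π n x) + ∫ e, costJ N T ν Ψ Φ π (n + 1) (T n x (π n x) e) ∂ν :=
        add_le_add le_rfl <| integral_mono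
          (integrable_costJ_comp hT hΨmeas hΦmeas hΨbd hΦbd hmeas _ _ _ _)
          (integrable_costJ_comp hT hΨmeas hΦmeas hΨbd hΦbd hπ _ _ _ _) fun _ => ih π hπ _
    _ = costJ N T ν Ψ Φ π n x := (costJ_of_lt hn x).symm
termination_by N - n

end Optimality

theorem bellman_minimizer_policy_optimal_general [MeasurableSpace 𝒳] [MeasurableSpace ℰ]
    [MeasurableSpace U] [Fintype U] [MeasurableSingletonClass U]
    (N : ℕ) (T : ℕ → 𝒳 → U → ℰ → 𝒳)
    (hT : ∀ n u, Measurable (fun p : 𝒳 × ℰ => T n p.1 u p.2))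
    (ν : Measure ℰ) [IsProbabilityMeasure ν]
    (Ψ : 𝒳 → U → ℝ) (Φ : 𝒳 → ℝ)
    (hΨmeas : ∀ u, Measurable (fun x => Ψ x u)) (hΦmeas : Measurable Φ)
    (CΨ CΦ : ℝ) (hΨbd : ∀ x u, |Ψ x u| ≤ CΨ) (hΦbd : ∀ x, |Φ x| ≤ CΦ)
    (ustar : ℕ → 𝒳 → U) (hmeas : ∀ n, Measurable (ustar n))
    (hmin : ∀ n x, ∀ u : U,
      Ψ x (ustar n x) + ∫ e, valueV N T ν Ψ Φ (n + 1) (T n x (ustar n x) e) ∂ν ≤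
        Ψ x u + ∫ e, valueV N T ν Ψ Φ (n + 1) (T n x u e) ∂ν) :
    ∀ n x, costJ N T ν Ψ Φ ustar n x = valueV N T ν Ψ Φ n x := fun n x =>
  (valueV_eq_costJ_of_forall_le hmeas fun π hπ =>
    costJ_le_of_isBellmanMinimizer hT hΨmeas hΦmeas hΨbd hΦbd hmeas hmin n π hπ x).symm

/-- A policy selecting, at each `(n, x)`, a minimizer of the Bellman one-step cost
is optimal: its expected aggregated cost equals the value function everywhere. -/
theorem bellman_minimizer_policy_optimal [MeasurableSpace 𝒳] [MeasurableSpace ℰ]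
    [MeasurableSpace U] [Fintype U] [Nonempty U] [MeasurableSingletonClass U]
    (N : ℕ) (T : ℕ → 𝒳 → U → ℰ → 𝒳)
    (hT : ∀ n u, Measurable (fun p : 𝒳 × ℰ => T n p.1 u p.2))
    (ν : Measure ℰ) [IsProbabilityMeasure ν]
    (Ψ : 𝒳 → U → ℝ) (Φ : 𝒳 → ℝ)
    (hΨmeas : ∀ u, Measurable (fun x => Ψ x u)) (hΦmeas : Measurable Φ)
    (CΨ CΦ : ℝ) (hΨbd : ∀ x u, |Ψ x u| ≤ CΨ) (hΦbd : ∀ x, |Φ x| ≤ CΦ)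
    (ustar : ℕ → 𝒳 → U) (hmeas : ∀ n, Measurable (ustar n))
    (hmin : ∀ n x, ∀ u : U,
      Ψ x (ustar n x) + ∫ e, valueV N T ν Ψ Φ (n + 1) (T n x (ustar n x) e) ∂ν ≤
        Ψ x u + ∫ e, valueV N T ν Ψ Φ (n + 1) (T n x u e) ∂ν) :
    ∀ n x, costJ N T ν Ψ Φ ustar n x = valueV N T ν Ψ Φ n x :=
  bellman_minimizer_policy_optimal_general N T hT ν Ψ Φ hΨmeas hΦmeas CΨ CΦ hΨbd hΦbd ustar hmeas
    hmin
end
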